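/- Let Δ ⊂ ℝⁿ be a reflexive simplex with vertices p₀, …, pₙ, dual vertices l₀, …, lₙ (with ⟨p_i, l_j⟩ = −1 for i ≠ j), and weights w = (w₀, …, wₙ). Define ι : ℤⁿ → ℤ^{n+1} by ι(m) = (⟨m, l₀⟩, …, ⟨m, lₙ⟩), M(w) = {x ∈ ℤ^{n+1} : ∑ w_i x_i = 0}, and Δ(w) = {x ∈ ℝ^{n+1} : ∑ w_i x_i = 0 and x_i ≥ −1 for all i}. Then: ι is injective and ι(ℤⁿ) ⊆ M(w); Δ(w) equals the convex hull of ι(p₀), …, ι(pₙ), so ι maps Δ onto Δ(w); and Δ(w) is a reflexive polytope with respect to the lattice M(w) inside the hyperplane {x : ∑ w_i x_i = 0}. -/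

import Mathlib

open Finset

/-- The standard dot product on `Fin n → ℝ`. -/
def dotp {n : ℕ} (x y : Fin n → ℝ) : ℝ := ∑ i, x i * y i

/-- A point of `ℝⁿ` all of whose coordinates are integers. -/
def IsLatticePoint {n : ℕ} (x : Fin n → ℝ) : Prop := ∀ i, ∃ m : ℤ, x i = (m : ℝ)

/-- A lattice polytope: the convex hull of finitely many lattice points. -/
def IsLatticePolytope {n : ℕ} (Δ : Set (Fin n → ℝ)) : Prop :=
  ∃ V : Set (Fin n → ℝ), V.Finite ∧ (∀ v ∈ V, IsLatticePoint v) ∧ Δ = convexHull ℝ V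

/-- A (nonempty) face of a convex set `Δ`, cut out by a supporting hyperplane. -/
def IsFaceOf {n : ℕ} (F Δ : Set (Fin n → ℝ)) : Prop :=
  F.Nonempty ∧ ∃ u : Fin n → ℝ, ∃ c : ℝ,
    (∀ x ∈ Δ, dotp x u ≤ c) ∧ F = {x ∈ Δ | dotp x u = c}

/-- The dimension of a subset of `ℝⁿ`: the dimension of its affine span. -/
noncomputable def faceDim {n : ℕ} (F : Set (Fin n → ℝ)) : ℕ :=
  Module.finrank ℝ ↥(vectorSpan ℝ F)

/-- A reflexive polytope with respect to the lattice `ℤⁿ`: a lattice polytope with `0` in its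
interior, each of whose facets lies on a hyperplane `{x | ⟨x, l⟩ = -1}` with `l ∈ ℤⁿ`. -/
def IsReflexive {n : ℕ} (Δ : Set (Fin n → ℝ)) : Prop :=
  IsLatticePolytope Δ ∧ (0 : Fin n → ℝ) ∈ interior Δ ∧
    ∀ F : Set (Fin n → ℝ), IsFaceOf F Δ → faceDim F + 1 = n →
      ∃ l : Fin n → ℤ, F ⊆ {x | dotp x (fun i => (l i : ℝ)) = -1}

/-- The dual (polar) set `Δ* = {y | ⟨x, y⟩ ≥ -1 for all x ∈ Δ}`. -/
def dualSet {n : ℕ} (Δ : Set (Fin n → ℝ)) : Set (Fin n → ℝ) :=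
  {y | ∀ x ∈ Δ, -1 ≤ dotp x y}

/-- The face of `Δ*` dual to a face `Θ` of `Δ`. -/
def dualFace {n : ℕ} (Δ Θ : Set (Fin n → ℝ)) : Set (Fin n → ℝ) :=
  {y ∈ dualSet Δ | ∀ x ∈ Θ, dotp x y = -1}

/-- A reflexive pair `(P, L)`: `P` is the convex hull of finitely many points of `L`,
`0` lies in the relative (intrinsic) interior of `P`, and every facet of `P` lies on a
set `{x | ℓ(x) = -1}` for a linear functional `ℓ` taking integer values on `L`. -/
def IsReflexivePair {N : ℕ} (P L : Set (Fin N → ℝ)) : Prop :=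
  (∃ V : Set (Fin N → ℝ), V.Finite ∧ V ⊆ L ∧ P = convexHull ℝ V) ∧
  (0 : Fin N → ℝ) ∈ intrinsicInterior ℝ P ∧
  ∀ F : Set (Fin N → ℝ), IsFaceOf F P → faceDim F + 1 = faceDim P →
    ∃ u : Fin N → ℝ, (∀ v ∈ L, ∃ m : ℤ, dotp v u = (m : ℝ)) ∧ F ⊆ {x | dotp x u = -1}

section DotpAux

lemma dotp_comm {n : ℕ} (x y : Fin n → ℝ) : dotp x y = dotp y x := by
  unfold dotp; exact Finset.sum_congr rfl fun i _ => mul_comm _ _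

lemma dotp_add_left {n : ℕ} (x x' y : Fin n → ℝ) :
    dotp (x + x') y = dotp x y + dotp x' y := by
  unfold dotp; rw [← Finset.sum_add_distrib]
  exact Finset.sum_congr rfl fun i _ => by simp [add_mul]

lemma dotp_smul_left {n : ℕ} (c : ℝ) (x y : Fin n → ℝ) :
    dotp (c • x) y = c * dotp x y := by
  unfold dotp; rw [Finset.mul_sum]
  exact Finset.sum_congr rfl fun i _ => by simp [mul_assoc]

lemma dotp_sum_left {n : ℕ} {α : Type*} (s : Finset α) (f : α → (Fin n → ℝ)) (y : Fin n → ℝ) :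
    dotp (∑ a ∈ s, f a) y = ∑ a ∈ s, dotp (f a) y := by
  classical
  induction s using Finset.induction with
  | empty => simp [dotp]
  | @insert a s h ih => rw [Finset.sum_insert h, Finset.sum_insert h, dotp_add_left, ih]

lemma dotp_zero_left {n : ℕ} (y : Fin n → ℝ) : dotp 0 y = 0 := by simp [dotp]

lemma dotp_ite {n : ℕ} (x : Fin n → ℝ) (k : Fin n) :
    dotp x (fun j => if j = k then 1 else 0) = x k := by
  unfold dotp; simp

end DotpAux

section Geo
variable {N : ℕ} (W : Fin N → ℝ)

/-- The weighted-sum linear functional. -/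
def wphi : (Fin N → ℝ) →ₗ[ℝ] ℝ where
  toFun x := ∑ i, W i * x i
  map_add' a b := by simp [mul_add, Finset.sum_add_distrib]
  map_smul' c x := by simp [Finset.mul_sum, mul_left_comm]

lemma wphi_apply (x : Fin N → ℝ) : wphi W x = ∑ i, W i * x i := rfl

def wS : Set (Fin N → ℝ) := {x | ∑ i, W i * x i = 0 ∧ ∀ i, -1 ≤ x i}

lemma mem_wS {x : Fin N → ℝ} : x ∈ wS W ↔ wphi W x = 0 ∧ ∀ i, -1 ≤ x i := Iff.rfl

lemma wS_convex : Convex ℝ (wS W) := by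
  have h1 : Convex ℝ {x : Fin N → ℝ | wphi W x = 0} :=
    convex_hyperplane (wphi W).isLinear 0
  have h2 : ∀ i : Fin N, Convex ℝ {x : Fin N → ℝ | -1 ≤ x i} := by
    intro i
    exact convex_halfSpace_ge (IsLinearMap.mk (fun a b => rfl) (fun c a => rfl)) (-1)
  have : wS W = {x | wphi W x = 0} ∩ ⋂ i, {x | -1 ≤ x i} := by
    ext x; simp [mem_wS, Set.mem_iInter]
  rw [this]
  exact h1.inter (convex_iInter h2)

lemma ball_subset_wS {x : Fin N → ℝ} (hx : wphi W x = 0) (h : ‖x‖ < 1) : x ∈ wS W := by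
  refine ⟨hx, fun i => ?_⟩
  have := (norm_le_pi_norm x i).trans_lt h
  rw [Real.norm_eq_abs, abs_lt] at this
  linarith [this.1]

lemma vectorSpan_wS : vectorSpan ℝ (wS W) = LinearMap.ker (wphi W) := by
  apply le_antisymm
  · rw [vectorSpan_def, Submodule.span_le]
    rintro z ⟨a, ha, b, hb, rfl⟩
    simp only [SetLike.mem_coe, LinearMap.mem_ker, vsub_eq_sub, map_sub]
    rw [wphi_apply, wphi_apply, ha.1, hb.1, sub_zero]
  · intro z hz
    rw [LinearMap.mem_ker] at hz
    rcases eq_or_ne z 0 with rfl | hz0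
    · exact Submodule.zero_mem _
    set ε : ℝ := (2 * ‖z‖)⁻¹ with hε
    have hzpos : 0 < ‖z‖ := norm_pos_iff.2 hz0
    have hεpos : 0 < ε := by positivity
    have hmem : ε • z ∈ wS W := by
      apply ball_subset_wS
      · rw [map_smul, hz, smul_zero]
      · rw [norm_smul, Real.norm_eq_abs, abs_of_pos hεpos, hε]
        rw [inv_mul_eq_div, div_lt_one (by positivity)]
        linarith
    have h0 : (0 : Fin N → ℝ) ∈ wS W := by
      refine ⟨by simp [wphi_apply], fun i => by norm_num⟩
    have : ε • z - 0 ∈ vectorSpan ℝ (wS W) := vsub_mem_vectorSpan ℝ hmem h0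
    rw [sub_zero] at this
    have := Submodule.smul_mem (vectorSpan ℝ (wS W)) ε⁻¹ this
    rwa [smul_smul, inv_mul_cancel₀ hεpos.ne', one_smul] at this

lemma zero_mem_intrinsicInterior_wS : (0 : Fin N → ℝ) ∈ intrinsicInterior ℝ (wS W) := by
  have h0 : (0 : Fin N → ℝ) ∈ wS W := ⟨by simp [wphi_apply], fun i => by norm_num⟩
  rw [mem_intrinsicInterior]
  refine ⟨⟨0, subset_affineSpan ℝ _ h0⟩, ?_, rfl⟩
  have haff : affineSpan ℝ (wS W) ≤ (LinearMap.ker (wphi W)).toAffineSubspace := by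
    rw [affineSpan_le]
    intro x hx
    rw [SetLike.mem_coe, Submodule.mem_toAffineSubspace, LinearMap.mem_ker]
    exact hx.1
  rw [mem_interior]
  refine ⟨(Subtype.val : affineSpan ℝ (wS W) → _) ⁻¹' Metric.ball 0 1, ?_,
    Metric.isOpen_ball.preimage continuous_subtype_val, ?_⟩
  · intro y hy
    have hnorm : ‖(y : Fin N → ℝ)‖ < 1 := by
      simpa [mem_ball_zero_iff] using hy
    refine ball_subset_wS W ?_ hnorm
    have := haff y.2
    rw [Submodule.mem_toAffineSubspace, LinearMap.mem_ker] at this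
    exact this
  · simp [Metric.mem_ball]

lemma facet_wS (hN : 0 < N) {F : Set (Fin N → ℝ)}
    (hF : IsFaceOf F (wS W)) (hdim : faceDim F + 1 = faceDim (wS W)) :
    ∃ k, ∀ x ∈ F, x k = -1 := by
  have hNe : Nonempty (Fin N) := ⟨⟨0, hN⟩⟩
  have hkerrk : Module.finrank ℝ (LinearMap.ker (wphi W)) + 0 = Module.finrank ℝ (LinearMap.ker (wphi W)) := rfl
  by_contra hcon
  push_neg at hcon
  choose g hgF hgk using hcon
  obtain ⟨hFne, u, c, hle, hFeq⟩ := hF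
  have hFS : F ⊆ wS W := by rw [hFeq]; exact Set.sep_subset _ _
  have hFconv : Convex ℝ F := by
    rw [hFeq]
    exact (wS_convex W).inter
      (convex_hyperplane ⟨fun a b => dotp_add_left a b u, fun t a => dotp_smul_left t a u⟩ c)
  have hNpos : (0:ℝ) < N := Nat.cast_pos.2 hN
  set a : ℝ := (N : ℝ)⁻¹ with ha
  have hapos : 0 < a := by positivity
  set xs : Fin N → ℝ := ∑ k, a • g k with hxs
  have hxsF : xs ∈ F := by
    rw [hxs]
    refine Convex.sum_mem hFconv (fun k _ => hapos.le) ?_ (fun k _ => hgF k)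
    rw [Finset.sum_const, Finset.card_univ, Fintype.card_fin, nsmul_eq_mul, ha]
    field_simp
  have hxs_apply : ∀ i, xs i = ∑ k, a * g k i := by
    intro i; rw [hxs]; simp [Finset.sum_apply]
  have hxspos : ∀ i, -1 < xs i := by
    intro i
    rw [hxs_apply]
    have hlt : ∑ _k : Fin N, a * (-1) < ∑ k, a * g k i := by
      apply Finset.sum_lt_sum
      · intro k _; exact mul_le_mul_of_nonneg_left ((hFS (hgF k)).2 i) hapos.le
      · refine ⟨i, Finset.mem_univ i, ?_⟩
        have h1 : -1 ≤ g i i := (hFS (hgF i)).2 i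
        exact mul_lt_mul_of_pos_left (lt_of_le_of_ne h1 (Ne.symm (hgk i))) hapos
    calc (-1 : ℝ) = ∑ _k : Fin N, a * (-1) := by
          rw [Finset.sum_const, Finset.card_univ, Fintype.card_fin, nsmul_eq_mul, ha]
          field_simp
    _ < _ := hlt
  have hc : dotp xs u = c := by
    have := hxsF; rw [hFeq] at this; exact this.2
  have hker : LinearMap.ker (wphi W) ≤ vectorSpan ℝ F := by
    intro z hz
    rcases eq_or_ne z 0 with rfl | hz0
    · exact Submodule.zero_mem _
    have hzker : wphi W z = 0 := hz
    set μ : ℝ := Finset.univ.inf' Finset.univ_nonempty (fun i => xs i + 1) with hμ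
    have hμpos : 0 < μ := by
      rw [hμ, Finset.lt_inf'_iff]
      intro i _; linarith [hxspos i]
    have hμle : ∀ i, μ ≤ xs i + 1 := fun i => Finset.inf'_le _ (Finset.mem_univ i)
    set δ : ℝ := μ / (2 * (‖z‖ + 1)) with hδ
    have hδpos : 0 < δ := by positivity
    have hcoord : ∀ i, |δ * z i| < xs i + 1 := by
      intro i
      have h1 : |z i| ≤ ‖z‖ := by simpa [Real.norm_eq_abs] using norm_le_pi_norm z i
      have h2 : |δ * z i| ≤ δ * ‖z‖ := by
        rw [abs_mul, abs_of_pos hδpos]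
        exact mul_le_mul_of_nonneg_left h1 hδpos.le
      have h3 : δ * ‖z‖ < μ := by
        rw [hδ, div_mul_eq_mul_div, div_lt_iff₀ (by positivity)]
        nlinarith [norm_nonneg z, hμpos]
      linarith [hμle i]
    have hmem : ∀ s : ℝ, s = 1 ∨ s = -1 → xs + (s * δ) • z ∈ wS W := by
      intro s hs
      constructor
      · show wphi W (xs + (s * δ) • z) = 0
        rw [map_add, map_smul, hzker, smul_zero, add_zero]
        exact (hFS hxsF).1
      · intro i
        have := hcoord i
        rw [abs_lt] at this
        simp only [Pi.add_apply, Pi.smul_apply, smul_eq_mul]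
        rcases hs with rfl | rfl
        · rw [one_mul]; linarith [this.1]
        · rw [neg_one_mul, neg_mul]; linarith [this.2]
    have hp1 := hmem 1 (Or.inl rfl)
    have hm1 := hmem (-1) (Or.inr rfl)
    rw [one_mul] at hp1
    have hd1 : dotp (xs + δ • z) u = dotp xs u + δ * dotp z u := by
      rw [dotp_add_left, dotp_smul_left]
    have hd2 : dotp (xs + (-1 * δ) • z) u = dotp xs u + (-1 * δ) * dotp z u := by
      rw [dotp_add_left, dotp_smul_left]
    have le1 := hle _ hp1
    have le2 := hle _ hm1
    rw [hd1, hc] at le1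
    rw [hd2, hc] at le2
    have hzu : dotp z u = 0 := by nlinarith
    have hFmem : xs + δ • z ∈ F := by
      rw [hFeq]
      exact ⟨hp1, by rw [hd1, hc, hzu]; ring⟩
    have hvs : (xs + δ • z) -ᵥ xs ∈ vectorSpan ℝ F := vsub_mem_vectorSpan ℝ hFmem hxsF
    rw [vsub_eq_sub, add_sub_cancel_left] at hvs
    have := Submodule.smul_mem (vectorSpan ℝ F) δ⁻¹ hvs
    rwa [smul_smul, inv_mul_cancel₀ hδpos.ne', one_smul] at this
  have heq : faceDim (wS W) = Module.finrank ℝ (LinearMap.ker (wphi W)) := by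
    unfold faceDim; rw [vectorSpan_wS]
  have h1 : faceDim (wS W) ≤ faceDim F := heq ▸ Submodule.finrank_mono hker
  omega

end Geo

/-- Let `Δ ⊂ ℝⁿ` be a reflexive simplex with vertices `p₀, …, pₙ`, dual
vertices `l₀, …, lₙ ∈ ℤⁿ` and weights `w`. Define `ι : ℤⁿ → ℤ^{n+1}` by
`ι(m) = (⟨m, l₀⟩, …, ⟨m, lₙ⟩)`, `M(w) = {x ∈ ℤ^{n+1} | ∑ wᵢ xᵢ = 0}` and
`Δ(w) = {x ∈ ℝ^{n+1} | ∑ wᵢ xᵢ = 0, xᵢ ≥ -1}`. Then `ι` is injective with image in `M(w)`,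
`Δ(w)` is the convex hull of the `ι(pᵢ)`, `ι` maps `Δ` onto `Δ(w)`, and `(Δ(w), M(w))` is a
reflexive pair. -/
theorem iota_maps_reflexive_simplex_to_weight_simplex (n : ℕ) (Δ : Set (Fin n → ℝ))
    (p : Fin (n + 1) → (Fin n → ℝ)) (lZ : Fin (n + 1) → (Fin n → ℤ))
    (hp : ∀ i, IsLatticePoint (p i))
    (haff : AffineIndependent ℝ p)
    (hΔ : Δ = convexHull ℝ (Set.range p))
    (href : IsReflexive Δ)
    (hdual : dualSet Δ = convexHull ℝ (Set.range fun j => fun i => (lZ j i : ℝ)))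
    (hpair : ∀ i j, i ≠ j → dotp (p i) (fun k => (lZ j k : ℝ)) = -1)
    (w : Fin (n + 1) → ℤ) (hwpos : ∀ i, 0 < w i)
    (hwgcd : Finset.univ.gcd w = 1)
    (hwsum : ∑ i, (w i : ℝ) • p i = (0 : Fin n → ℝ))
    (ι : (Fin n → ℤ) → (Fin (n + 1) → ℤ))
    (hι : ∀ m j, ι m j = ∑ i, m i * lZ j i)
    (ιR : (Fin n → ℝ) → (Fin (n + 1) → ℝ))
    (hιR : ∀ x j, ιR x j = dotp x (fun i => (lZ j i : ℝ)))
    (Mw : Set (Fin (n + 1) → ℝ))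
    (hMw : Mw = {x | (∀ i, ∃ m : ℤ, x i = (m : ℝ)) ∧ ∑ i, (w i : ℝ) * x i = 0})
    (Δw : Set (Fin (n + 1) → ℝ))
    (hΔw : Δw = {x | ∑ i, (w i : ℝ) * x i = 0 ∧ ∀ i, -1 ≤ x i}) :
    Function.Injective ι ∧
    (∀ m : Fin n → ℤ, ∑ j, w j * ι m j = 0) ∧
    Δw = convexHull ℝ (Set.range fun i => ιR (p i)) ∧
    ιR '' Δ = Δw ∧
    IsReflexivePair Δw Mw := by
  classical
  set lR : Fin (n + 1) → (Fin n → ℝ) := fun j => fun i => (lZ j i : ℝ) with hlR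
  set Wr : ℝ := ∑ i, (w i : ℝ) with hWr
  have hwR : ∀ i, (0:ℝ) < (w i : ℝ) := fun i => by exact_mod_cast hwpos i
  have hWpos : (0:ℝ) < Wr := Finset.sum_pos (fun i _ => hwR i) ⟨0, Finset.mem_univ 0⟩
  have hpl : ∀ j, ∑ i, (w i : ℝ) * dotp (p i) (lR j) = 0 := by
    intro j
    calc ∑ i, (w i : ℝ) * dotp (p i) (lR j)
        = ∑ i, dotp ((w i : ℝ) • p i) (lR j) := by
          exact Finset.sum_congr rfl fun i _ => (dotp_smul_left _ _ _).symm
      _ = dotp (∑ i, (w i : ℝ) • p i) (lR j) := (dotp_sum_left _ _ _).symm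
      _ = 0 := by rw [hwsum, dotp_zero_left]
  have hpair' : ∀ i j, i ≠ j → dotp (p i) (lR j) = -1 := fun i j hij => hpair i j hij
  have herasesum : ∀ j : Fin (n+1), ∑ i ∈ Finset.univ.erase j, (w i : ℝ) = Wr - (w j : ℝ) := by
    intro j
    rw [hWr, ← Finset.add_sum_erase _ _ (Finset.mem_univ j)]
    ring
  have hdiag : ∀ j, (w j : ℝ) * (dotp (p j) (lR j) + 1) = Wr := by
    intro j
    have h1 := hpl j
    rw [← Finset.add_sum_erase _ _ (Finset.mem_univ j)] at h1
    have h2 : ∑ i ∈ Finset.univ.erase j, (w i : ℝ) * dotp (p i) (lR j)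
        = -(Wr - (w j : ℝ)) := by
      calc ∑ i ∈ Finset.univ.erase j, (w i : ℝ) * dotp (p i) (lR j)
          = ∑ i ∈ Finset.univ.erase j, -(w i : ℝ) := by
            exact Finset.sum_congr rfl fun i hi => by
              rw [hpair' i j (Finset.ne_of_mem_erase hi)]; ring
        _ = -∑ i ∈ Finset.univ.erase j, (w i : ℝ) := by rw [Finset.sum_neg_distrib]
        _ = -(Wr - (w j : ℝ)) := by rw [herasesum]
    rw [h2] at h1
    linarith [h1]
  -- the weighted sum of the dual vertices vanishes
  set sL : Fin n → ℝ := ∑ j, (w j : ℝ) • lR j with hsL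
  have hdps : ∀ i, dotp sL (p i) = 0 := by
    intro i
    have hterm : ∀ j, dotp ((w j : ℝ) • lR j) (p i) = (w j : ℝ) * dotp (p i) (lR j) := by
      intro j; rw [dotp_smul_left, dotp_comm (lR j) (p i)]
    calc dotp sL (p i) = ∑ j, dotp ((w j : ℝ) • lR j) (p i) := by
          rw [hsL, dotp_sum_left]
      _ = ∑ j, (w j : ℝ) * dotp (p i) (lR j) := Finset.sum_congr rfl fun j _ => hterm j
      _ = 0 := by
          rw [← Finset.add_sum_erase _ _ (Finset.mem_univ i)]
          have h2 : ∑ j ∈ Finset.univ.erase i, (w j : ℝ) * dotp (p i) (lR j)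
              = -(Wr - (w i : ℝ)) := by
            calc ∑ j ∈ Finset.univ.erase i, (w j : ℝ) * dotp (p i) (lR j)
                = ∑ j ∈ Finset.univ.erase i, -(w j : ℝ) := by
                  exact Finset.sum_congr rfl fun j hj => by
                    rw [hpair' i j (Ne.symm (Finset.ne_of_mem_erase hj))]; ring
              _ = -∑ j ∈ Finset.univ.erase i, (w j : ℝ) := by rw [Finset.sum_neg_distrib]
              _ = -(Wr - (w i : ℝ)) := by rw [herasesum]
          rw [h2]
          have := hdiag i
          linarith [this]
  have hspan : Submodule.span ℝ (Set.range p) = ⊤ := by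
    have htop : affineSpan ℝ (Set.range p) = ⊤ :=
      haff.affineSpan_eq_top_iff_card_eq_finrank_add_one.2 (by
        simp [Module.finrank_fin_fun])
    rw [eq_top_iff]
    intro x _
    exact affineSpan_subset_span (by rw [htop]; exact AffineSubspace.mem_top ℝ _ x)
  have hsL0 : sL = 0 := by
    have hz : ∀ x : Fin n → ℝ, dotp x sL = 0 := by
      intro x
      have hx : x ∈ Submodule.span ℝ (Set.range p) := by rw [hspan]; trivial
      induction hx using Submodule.span_induction with
      | mem y hy =>
        obtain ⟨i, rfl⟩ := hy
        rw [dotp_comm]; exact hdps i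
      | zero => exact dotp_zero_left sL
      | add a b _ _ ha hb => rw [dotp_add_left, ha, hb, add_zero]
      | smul c a _ ha => rw [dotp_smul_left, ha, mul_zero]
    funext k
    have := hz (fun j => if j = k then 1 else 0)
    simpa [dotp] using this
  have hsumlZ : ∀ i, ∑ j, w j * lZ j i = 0 := by
    intro i
    have h1 : sL i = 0 := by rw [hsL0]; simp
    have h2 : sL i = ∑ j, (w j : ℝ) * (lZ j i : ℝ) := by
      rw [hsL]; simp [hlR, Finset.sum_apply]
    rw [h2] at h1
    exact_mod_cast h1
  -- part 2
  have part2 : ∀ m : Fin n → ℤ, ∑ j, w j * ι m j = 0 := by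
    intro m
    calc ∑ j, w j * ι m j = ∑ j, ∑ i, m i * (w j * lZ j i) := by
          refine Finset.sum_congr rfl fun j _ => ?_
          rw [hι, Finset.mul_sum]
          exact Finset.sum_congr rfl fun i _ => by ring
      _ = ∑ i, ∑ j, m i * (w j * lZ j i) := Finset.sum_comm
      _ = ∑ i, m i * ∑ j, w j * lZ j i := by
          exact Finset.sum_congr rfl fun i _ => (Finset.mul_sum _ _ _).symm
      _ = 0 := by simp [hsumlZ]
  -- part 1 : injectivity
  have part1 : Function.Injective ι := by
    intro m₁ m₂ hm
    set v : Fin n → ℝ := fun i => ((m₁ i : ℝ) - (m₂ i : ℝ)) with hv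
    have hvl : ∀ j, dotp v (lR j) = 0 := by
      intro j
      have h1 : ((ι m₁ j : ℤ) : ℝ) = ((ι m₂ j : ℤ) : ℝ) := by
        exact_mod_cast congrArg (fun f => f j) hm
      rw [hι, hι] at h1
      push_cast at h1
      show (∑ i, v i * (lZ j i : ℝ)) = 0
      have : ∑ i, v i * (lZ j i : ℝ)
          = (∑ i, (m₁ i : ℝ) * (lZ j i : ℝ)) - ∑ i, (m₂ i : ℝ) * (lZ j i : ℝ) := by
        rw [← Finset.sum_sub_distrib]
        exact Finset.sum_congr rfl fun i _ => by rw [hv]; ring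
      rw [this, h1, sub_self]
    set B : ℝ := ∑ i, |dotp (p i) v| with hB
    have hBnn : 0 ≤ B := Finset.sum_nonneg fun i _ => abs_nonneg _
    set ε : ℝ := (B + 1)⁻¹ with hε
    have hεpos : 0 < ε := by positivity
    have hdual_mem : ε • v ∈ dualSet Δ := by
      intro x hx
      rw [hΔ] at hx
      have hconv : Convex ℝ {y : Fin n → ℝ | -1 ≤ dotp y (ε • v)} :=
        convex_halfSpace_ge ⟨fun a b => dotp_add_left a b _, fun t a => dotp_smul_left t a _⟩ (-1)
      have hsub : Set.range p ⊆ {y : Fin n → ℝ | -1 ≤ dotp y (ε • v)} := by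
        rintro _ ⟨i, rfl⟩
        show -1 ≤ dotp (p i) (ε • v)
        have heq : dotp (p i) (ε • v) = ε * dotp (p i) v := by
          rw [dotp_comm, dotp_smul_left, dotp_comm]
        rw [heq]
        have h1 : |dotp (p i) v| ≤ B :=
          Finset.single_le_sum (f := fun i => |dotp (p i) v|)
            (fun i _ => abs_nonneg _) (Finset.mem_univ i)
        have h2 : -(B : ℝ) ≤ dotp (p i) v := by
          have := neg_abs_le (dotp (p i) v); linarith
        have h3 : ε * (B + 1) = 1 := by rw [hε, inv_mul_cancel₀ (by positivity)]
        nlinarith [hεpos]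
      exact convexHull_min hsub hconv hx
    rw [hdual] at hdual_mem
    have hlinr : IsLinearMap ℝ (fun y : Fin n → ℝ => dotp v y) := by
      constructor
      · intro a b
        rw [dotp_comm v (a + b), dotp_add_left, dotp_comm a v, dotp_comm b v]
      · intro t a
        rw [dotp_comm v (t • a), dotp_smul_left, dotp_comm a v, smul_eq_mul]
    have hzero : dotp v (ε • v) = 0 := by
      have hconv : Convex ℝ {y : Fin n → ℝ | dotp v y = 0} := convex_hyperplane hlinr 0
      have hsub : (Set.range fun j => fun i => (lZ j i : ℝ)) ⊆ {y : Fin n → ℝ | dotp v y = 0} := by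
        rintro _ ⟨j, rfl⟩
        exact hvl j
      exact convexHull_min hsub hconv hdual_mem
    have hvv : dotp v v = 0 := by
      have : dotp v (ε • v) = ε * dotp v v := by
        rw [dotp_comm, dotp_smul_left]
      rw [this] at hzero
      rcases mul_eq_zero.1 hzero with h | h
      · exact absurd h hεpos.ne'
      · exact h
    have hv0 : ∀ i, v i = 0 := by
      intro i
      have hsq : ∑ i, v i * v i = 0 := hvv
      have := (Finset.sum_eq_zero_iff_of_nonneg
        (fun i _ => mul_self_nonneg (v i))).1 hsq i (Finset.mem_univ i)
      exact mul_self_eq_zero.1 this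
    funext i
    have h : (m₁ i : ℝ) - (m₂ i : ℝ) = 0 := hv0 i
    have : (m₁ i : ℝ) = (m₂ i : ℝ) := by linarith
    exact_mod_cast this
  -- the images of the vertices
  set q : Fin (n + 1) → (Fin (n + 1) → ℝ) := fun i => ιR (p i) with hq
  have hqc : ∀ i j, q i j = dotp (p i) (lR j) := fun i j => hιR (p i) j
  have hqoff : ∀ i j, i ≠ j → q i j = -1 := fun i j hij => by
    rw [hqc]; exact hpair' i j hij
  have hqd : ∀ i, (w i : ℝ) * (q i i + 1) = Wr := fun i => by
    rw [hqc]; exact hdiag i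
  have hqge : ∀ i j, -1 ≤ q i j := by
    intro i j
    rcases eq_or_ne i j with rfl | hij
    · have h := hqd i
      have := hwR i
      nlinarith [hWpos]
    · rw [hqoff i j hij]
  have hqsum : ∀ i, ∑ j, (w j : ℝ) * q i j = 0 := by
    intro i
    calc ∑ j, (w j : ℝ) * q i j
        = ∑ j, dotp ((w j : ℝ) • lR j) (p i) := by
          refine Finset.sum_congr rfl fun j _ => ?_
          rw [dotp_smul_left, dotp_comm (lR j) (p i), hqc]
      _ = dotp sL (p i) := by rw [hsL, dotp_sum_left]
      _ = 0 := hdps i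
  have hΔwS : Δw = wS (fun i => (w i : ℝ)) := hΔw
  have hqmem : ∀ i, q i ∈ Δw := by
    intro i
    rw [hΔw]
    exact ⟨hqsum i, hqge i⟩
  -- part 3
  have part3 : Δw = convexHull ℝ (Set.range fun i => ιR (p i)) := by
    apply Set.Subset.antisymm
    · intro x hx
      rw [hΔw] at hx
      obtain ⟨hx1, hx2⟩ := hx
      set cf : Fin (n + 1) → ℝ := fun j => (w j : ℝ) * (x j + 1) / Wr with hcf
      have hcnn : ∀ j, 0 ≤ cf j := by
        intro j
        exact div_nonneg (mul_nonneg (hwR j).le (by linarith [hx2 j])) hWpos.le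
      have hcsum : ∑ j, cf j = 1 := by
        have hh : ∑ j, (w j : ℝ) * (x j + 1) = Wr := by
          have : ∑ j, (w j : ℝ) * (x j + 1) = (∑ j, (w j : ℝ) * x j) + ∑ j, (w j : ℝ) := by
            rw [← Finset.sum_add_distrib]
            exact Finset.sum_congr rfl fun j _ => by ring
          rw [this, hx1, zero_add, hWr]
        rw [hcf, ← Finset.sum_div, hh, div_self hWpos.ne']
      have hxeq : x = ∑ j, cf j • q j := by
        funext k
        rw [Finset.sum_apply]
        simp only [Pi.smul_apply, smul_eq_mul]
        rw [← Finset.add_sum_erase _ _ (Finset.mem_univ k)]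
        have herase : ∑ j ∈ Finset.univ.erase k, cf j * q j k
            = -(1 - cf k) := by
          calc ∑ j ∈ Finset.univ.erase k, cf j * q j k
              = ∑ j ∈ Finset.univ.erase k, -cf j := by
                exact Finset.sum_congr rfl fun j hj => by
                  rw [hqoff j k (Finset.ne_of_mem_erase hj)]; ring
            _ = -∑ j ∈ Finset.univ.erase k, cf j := by rw [Finset.sum_neg_distrib]
            _ = -(1 - cf k) := by
                rw [show ∑ j ∈ Finset.univ.erase k, cf j = 1 - cf k by
                  have := hcsum
                  rw [← Finset.add_sum_erase _ _ (Finset.mem_univ k)] at this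
                  linarith]
        rw [herase]
        have h5 : cf k * (q k k + 1) = x k + 1 := by
          have h6 := hqd k
          show (w k : ℝ) * (x k + 1) / Wr * (q k k + 1) = x k + 1
          rw [div_mul_eq_mul_div, div_eq_iff hWpos.ne']
          calc (w k : ℝ) * (x k + 1) * (q k k + 1)
              = (x k + 1) * ((w k : ℝ) * (q k k + 1)) := by ring
            _ = (x k + 1) * Wr := by rw [h6]
        nlinarith [h5]
      rw [hxeq]
      exact Convex.sum_mem (convex_convexHull ℝ _) (fun j _ => hcnn j) hcsum
        (fun j _ => subset_convexHull ℝ _ ⟨j, rfl⟩)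
    · refine convexHull_min ?_ ?_
      · rintro _ ⟨i, rfl⟩
        exact hqmem i
      · rw [hΔwS]; exact wS_convex _
  -- part 4
  have hlinι : IsLinearMap ℝ ιR := by
    constructor
    · intro a b
      funext j
      rw [Pi.add_apply, hιR, hιR, hιR, dotp_add_left]
    · intro t a
      funext j
      rw [Pi.smul_apply, hιR, hιR, dotp_smul_left, smul_eq_mul]
  have part4 : ιR '' Δ = Δw := by
    rw [hΔ, hlinι.image_convexHull, ← Set.range_comp]
    exact part3.symm
  -- part 5
  have part5 : IsReflexivePair Δw Mw := by
    refine ⟨⟨Set.range q, Set.finite_range q, ?_, part3⟩, ?_, ?_⟩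
    · rintro _ ⟨i, rfl⟩
      rw [hMw]
      refine ⟨?_, hqsum i⟩
      intro j
      choose mp hmp using hp i
      refine ⟨∑ k, mp k * lZ j k, ?_⟩
      rw [hqc]
      show (∑ k, p i k * (lZ j k : ℝ)) = _
      push_cast
      exact Finset.sum_congr rfl fun k _ => by rw [hmp k]
    · rw [hΔwS]; exact zero_mem_intrinsicInterior_wS _
    · intro F hF hdim
      rw [hΔwS] at hF hdim
      obtain ⟨k, hk⟩ := facet_wS _ (Nat.succ_pos n) hF hdim
      refine ⟨fun j => if j = k then 1 else 0, ?_, ?_⟩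
      · intro v hv
        rw [hMw] at hv
        obtain ⟨m, hm⟩ := hv.1 k
        exact ⟨m, by rw [dotp_ite, hm]⟩
      · intro x hx
        show dotp x _ = -1
        rw [dotp_ite]
        exact hk x hx
  exact ⟨part1, part2, part3, part4, part5⟩
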